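/- For a smooth, 2π-periodic, divergence-free, mean-zero vector field u on the 2-torus T², the identity ∑_{i,j} ∫_{T²} u_i (∂_i u_j) (-Δ u)_j dξ = 0 holds; i.e., the convection term is orthogonal in L² to the Stokes operator applied to u. -/

import Mathlib

open MeasureTheory

noncomputable section

/-- The fundamental box `[0,2π]²` of the torus `T² = (0,2π)²`. -/
def torusBox : Set (Fin 2 → ℝ) := Set.univ.pi fun _ => Set.Icc 0 (2 * Real.pi)

/-- Partial derivative `∂ᵢ f_j` of a vector field. -/
def pd (i : Fin 2) (f : (Fin 2 → ℝ) → (Fin 2 → ℝ)) (j : Fin 2) (ξ : Fin 2 → ℝ) : ℝ :=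
  fderiv ℝ f ξ (Pi.single i 1) j

/-- A smooth, 2π-periodic, divergence-free, mean-zero vector field on the 2-torus. -/
def IsTorusField (u : (Fin 2 → ℝ) → (Fin 2 → ℝ)) : Prop :=
  ContDiff ℝ (⊤ : ℕ∞) u ∧
  (∀ ξ : Fin 2 → ℝ, ∀ i : Fin 2, u (ξ + (2 * Real.pi) • (Pi.single i 1 : Fin 2 → ℝ)) = u ξ) ∧
  (∀ ξ : Fin 2 → ℝ, ∑ i, pd i u i ξ = 0) ∧
  (∀ j : Fin 2, ∫ ξ in torusBox, u ξ j = 0)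

/-- The trilinear convection form `b(u,v,w) = ∑_{i,j} ∫ u_i ∂ᵢv_j w_j dξ`. -/
def triForm (u v w : (Fin 2 → ℝ) → (Fin 2 → ℝ)) : ℝ :=
  ∑ i, ∑ j, ∫ ξ in torusBox, u ξ i * pd i v j ξ * w ξ j

/-- Partial derivative `∂ᵢ f` of a scalar field. -/
def pds (i : Fin 2) (f : (Fin 2 → ℝ) → ℝ) (ξ : Fin 2 → ℝ) : ℝ :=
  fderiv ℝ f ξ (Pi.single i 1)

/-- The componentwise Laplacian `(Δu)_j`. -/
def lap (u : (Fin 2 → ℝ) → (Fin 2 → ℝ)) (j : Fin 2) (ξ : Fin 2 → ℝ) : ℝ :=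
  ∑ k, pds k (fun η => pd k u j η) ξ

/-- Periodicity with period `2π` in each coordinate direction. -/
def Per (F : (Fin 2 → ℝ) → ℝ) : Prop :=
  ∀ ξ : Fin 2 → ℝ, ∀ i : Fin 2, F (ξ + (2 * Real.pi) • (Pi.single i 1 : Fin 2 → ℝ)) = F ξ

lemma torusBox_eq : torusBox = Set.Icc (0 : Fin 2 → ℝ) (fun _ => 2 * Real.pi) := by
  rw [← Set.pi_univ_Icc]; rfl

lemma isCompact_torusBox : IsCompact torusBox :=
  isCompact_univ_pi fun _ => isCompact_Icc

lemma measurableSet_torusBox : MeasurableSet torusBox :=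
  isCompact_torusBox.isClosed.measurableSet

lemma integrableOn_torusBox {f : (Fin 2 → ℝ) → ℝ} (hf : Continuous f) :
    IntegrableOn f torusBox := hf.continuousOn.integrableOn_compact isCompact_torusBox

lemma contDiff_pds {F : (Fin 2 → ℝ) → ℝ} (hF : ContDiff ℝ (⊤ : ℕ∞) F) (i : Fin 2) :
    ContDiff ℝ (⊤ : ℕ∞) (pds i F) :=
  (hF.fderiv_right (by simp)).clm_apply contDiff_const

lemma per_pds {F : (Fin 2 → ℝ) → ℝ} (hF : ContDiff ℝ (⊤ : ℕ∞) F) (hP : Per F) (i : Fin 2) :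
    Per (pds i F) := by
  intro ξ j
  have hd : Differentiable ℝ F := hF.differentiable (by simp)
  set c := (2 * Real.pi) • (Pi.single j 1 : Fin 2 → ℝ) with hc
  have h1 : HasFDerivAt (fun η => F (η + c)) (fderiv ℝ F (ξ + c)) ξ := by
    simpa [Function.comp_def] using (hd (ξ + c)).hasFDerivAt.comp ξ ((hasFDerivAt_id ξ).add_const c)
  have h2 : (fun η => F (η + c)) = F := funext fun η => hP η j
  rw [h2] at h1
  simp [pds, h1.fderiv]

lemma per_mul {F G : (Fin 2 → ℝ) → ℝ} (hF : Per F) (hG : Per G) :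
    Per (fun ξ => F ξ * G ξ) := fun ξ j => by simp only [hF ξ j, hG ξ j]

lemma pds_mul {F G : (Fin 2 → ℝ) → ℝ} (hF : ContDiff ℝ (⊤ : ℕ∞) F) (hG : ContDiff ℝ (⊤ : ℕ∞) G)
    (i : Fin 2) (ξ : Fin 2 → ℝ) :
    pds i (fun η => F η * G η) ξ = pds i F ξ * G ξ + F ξ * pds i G ξ := by
  have := fderiv_fun_mul (𝕜 := ℝ) (hF.differentiable (by simp) ξ) (hG.differentiable (by simp) ξ)
  simp [pds, this]; ring

lemma pds_comm {F : (Fin 2 → ℝ) → ℝ} (hF : ContDiff ℝ (⊤ : ℕ∞) F) (i k : Fin 2) (ξ : Fin 2 → ℝ) :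
    pds i (pds k F) ξ = pds k (pds i F) ξ := by
  have hΦ : ContDiff ℝ (⊤ : ℕ∞) (fderiv ℝ F) := hF.fderiv_right (by simp)
  have key : ∀ w : Fin 2 → ℝ,
      fderiv ℝ (fun η => fderiv ℝ F η w) ξ = (fderiv ℝ (fderiv ℝ F) ξ).flip w := by
    intro w
    have h1 : HasFDerivAt (fderiv ℝ F) (fderiv ℝ (fderiv ℝ F) ξ) ξ :=
      (hΦ.differentiable (by simp) ξ).hasFDerivAt
    have h2 := h1.clm_apply (hasFDerivAt_const w ξ)
    simpa using h2.fderiv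
  have hsym : IsSymmSndFDerivAt ℝ F ξ := hF.contDiffAt.isSymmSndFDerivAt (by rw [minSmoothness_of_isRCLikeNormedField]; exact WithTop.coe_le_coe.mpr le_top)
  have e1 : pds k F = fun η => fderiv ℝ F η (Pi.single k 1) := rfl
  have e2 : pds i F = fun η => fderiv ℝ F η (Pi.single i 1) := rfl
  simp only [pds, e1, e2, key, ContinuousLinearMap.flip_apply]
  exact hsym _ _

lemma integral_pds_eq_zero {F : (Fin 2 → ℝ) → ℝ} (hF : ContDiff ℝ (⊤ : ℕ∞) F) (hP : Per F)
    (k : Fin 2) : ∫ ξ in torusBox, pds k F ξ = 0 := by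
  classical
  set a : Fin 2 → ℝ := 0 with ha
  set b : Fin 2 → ℝ := fun _ => 2 * Real.pi with hb
  have hle : a ≤ b := fun i => by positivity
  set f : (Fin 2 → ℝ) → (Fin 2 → ℝ) := fun x => F x • (Pi.single k 1 : Fin 2 → ℝ) with hf
  set f' : (Fin 2 → ℝ) → (Fin 2 → ℝ) →L[ℝ] (Fin 2 → ℝ) := fun x =>
    (fderiv ℝ F x).smulRight (Pi.single k 1 : Fin 2 → ℝ) with hf'
  have hFd : Differentiable ℝ F := hF.differentiable (by simp)
  have Hd : ∀ x, HasFDerivAt f (f' x) x := fun x =>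
    (hFd x).hasFDerivAt.smul_const (Pi.single k 1 : Fin 2 → ℝ)
  have hdiv : ∀ x, (∑ i, f' x (Pi.single i 1) i) = pds k F x := by
    intro x
    simp only [hf', ContinuousLinearMap.smulRight_apply, Pi.smul_apply, smul_eq_mul]
    rw [Fin.sum_univ_two]
    fin_cases k <;> simp [pds]
  have key := integral_divergence_of_hasFDerivAt_off_countable (n := 1) a b hle f f' ∅
    Set.countable_empty
    ((hF.continuous.smul continuous_const).continuousOn)
    (fun x _ => Hd x)
    (by
      rw [← torusBox_eq]
      exact (integrableOn_torusBox ((contDiff_pds hF k).continuous)).congr_fun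
        (fun x _ => (hdiv x).symm) (isCompact_torusBox.isClosed.measurableSet))
  have hL : ∫ x in Set.Icc a b, ∑ i, f' x (Pi.single i 1) i = ∫ ξ in torusBox, pds k F ξ := by
    rw [torusBox_eq]
    exact setIntegral_congr_fun (torusBox_eq ▸ isCompact_torusBox.isClosed.measurableSet)
      (fun x _ => hdiv x)
  have hR : ∑ i : Fin 2, ((∫ x in Set.Icc (a ∘ Fin.succAbove i) (b ∘ Fin.succAbove i),
        f (Fin.insertNth i (b i) x) i) -
      ∫ x in Set.Icc (a ∘ Fin.succAbove i) (b ∘ Fin.succAbove i),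
        f (Fin.insertNth i (a i) x) i) = 0 := by
    refine Finset.sum_eq_zero fun i _ => ?_
    rcases eq_or_ne i k with rfl | hik
    · have hins : ∀ x : Fin 1 → ℝ, Fin.insertNth i (b i) x =
          Fin.insertNth i (a i) x + (2 * Real.pi) • (Pi.single i 1 : Fin 2 → ℝ) := by
        intro x; funext m
        rcases eq_or_ne m i with rfl | hm
        · simp [ha, hb]
        · obtain ⟨j, rfl⟩ := Fin.exists_succAbove_eq hm
          simp [Pi.single_eq_of_ne hm]
      have : ∀ x : Fin 1 → ℝ, f (Fin.insertNth i (b i) x) i = f (Fin.insertNth i (a i) x) i := by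
        intro x
        simp only [hf, Pi.smul_apply, Pi.single_eq_same, smul_eq_mul, mul_one, hins x,
          hP (Fin.insertNth i (a i) x) i]
      simp [this]
    · simp [hf, Pi.single_eq_of_ne hik]
  rw [key, hR] at hL
  exact hL.symm

/-- Integration by parts on the torus. -/
lemma ibp {f g : (Fin 2 → ℝ) → ℝ} (hf : ContDiff ℝ (⊤ : ℕ∞) f) (hg : ContDiff ℝ (⊤ : ℕ∞) g)
    (Pf : Per f) (Pg : Per g) (k : Fin 2) :
    ∫ ξ in torusBox, f ξ * pds k g ξ = -∫ ξ in torusBox, pds k f ξ * g ξ := by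
  have h0 := integral_pds_eq_zero (hf.mul hg) (per_mul Pf Pg) k
  rw [setIntegral_congr_fun measurableSet_torusBox
    (fun ξ _ => pds_mul hf hg k ξ)] at h0
  rw [integral_add (f := fun ξ => pds k f ξ * g ξ) (g := fun ξ => f ξ * pds k g ξ)
      (integrableOn_torusBox (((contDiff_pds hf k).continuous).mul hg.continuous))
      (integrableOn_torusBox (hf.continuous.mul (contDiff_pds hg k).continuous))] at h0
  linarith

lemma sumInt (f : Fin 2 → (Fin 2 → ℝ) → ℝ) (hf : ∀ m, Continuous (f m)) :
    ∑ m, ∫ ξ in torusBox, f m ξ = ∫ ξ in torusBox, ∑ m, f m ξ :=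
  (integral_finset_sum Finset.univ fun m _ => integrableOn_torusBox (hf m)).symm

theorem stmt4 (u : (Fin 2 → ℝ) → (Fin 2 → ℝ)) (hu : IsTorusField u) :
    ∑ i, ∑ j, ∫ ξ in torusBox, u ξ i * pd i u j ξ * (-(lap u j ξ)) = 0 := by
  obtain ⟨hs, hp, hdvg, -⟩ := hu
  have hU : ∀ j, ContDiff ℝ (⊤ : ℕ∞) (fun ξ : Fin 2 → ℝ => u ξ j) := fun j =>
    (ContinuousLinearMap.proj (R := ℝ) (φ := fun _ : Fin 2 => ℝ) j).contDiff.comp hs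
  have hUp : ∀ j : Fin 2, Per (fun ξ => u ξ j) := fun j ξ i => congrFun (hp ξ i) j
  have hpd : ∀ (i j : Fin 2) (ξ : Fin 2 → ℝ),
      pd i u j ξ = pds i (fun η => u η j) ξ := by
    intro i j ξ
    have h := (ContinuousLinearMap.proj (R := ℝ) (φ := fun _ : Fin 2 => ℝ) j).hasFDerivAt.comp ξ
      (hs.differentiable (by simp) ξ).hasFDerivAt
    have h2 : fderiv ℝ (fun η => u η j) ξ =
        (ContinuousLinearMap.proj (R := ℝ) (φ := fun _ : Fin 2 => ℝ) j).comp (fderiv ℝ u ξ) :=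
      h.fderiv
    simp [pds, pd, h2]
  -- continuity facts
  have c1 : ∀ j : Fin 2, Continuous (fun ξ => u ξ j) := fun j => (hU j).continuous
  have c2 : ∀ i j : Fin 2, Continuous (pds i (fun η => u η j)) := fun i j =>
    (contDiff_pds (hU j) i).continuous
  have c3 : ∀ k i j : Fin 2, Continuous (pds k (pds i (fun η => u η j))) := fun k i j =>
    (contDiff_pds (contDiff_pds (hU j) i) k).continuous
  have hdvg' : ∀ ξ : Fin 2 → ℝ, ∑ i, pds i (fun η => u η i) ξ = 0 := by
    intro ξ
    have := hdvg ξ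
    simpa only [hpd] using this
  -- Step 1: expand the Laplacian and push the sum out of the integral
  have step1 : ∀ i j : Fin 2,
      (∫ ξ in torusBox, u ξ i * pd i u j ξ * (-(lap u j ξ)))
        = ∑ k : Fin 2, ∫ ξ in torusBox,
            -(u ξ i * pds i (fun η => u η j) ξ * pds k (pds k (fun η => u η j)) ξ) := by
    intro i j
    have hfun : ∀ k : Fin 2, (fun η => pd k u j η) = pds k (fun η => u η j) :=
      fun k => funext fun η => hpd k j η
    rw [sumInt (fun k ξ => -(u ξ i * pds i (fun η => u η j) ξ * pds k (pds k (fun η => u η j)) ξ)) (fun k => (((c1 i).mul (c2 i j)).mul (c3 k k j)).neg)]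
    apply setIntegral_congr_fun measurableSet_torusBox
    intro ξ _
    simp only [lap, hfun, hpd]
    rw [Fin.sum_univ_two, Fin.sum_univ_two]
    ring
  -- Step 2: integrate by parts once
  have step2 : ∀ i j k : Fin 2,
      (∫ ξ in torusBox,
          -(u ξ i * pds i (fun η => u η j) ξ * pds k (pds k (fun η => u η j)) ξ))
        = (∫ ξ in torusBox, pds k (fun η => u η i) ξ * pds i (fun η => u η j) ξ *
              pds k (fun η => u η j) ξ)
          + ∫ ξ in torusBox, u ξ i * pds i (pds k (fun η => u η j)) ξ *
              pds k (fun η => u η j) ξ := by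
    intro i j k
    have hfs : ContDiff ℝ (⊤ : ℕ∞) (fun ξ => u ξ i * pds i (fun η => u η j) ξ) :=
      (hU i).mul (contDiff_pds (hU j) i)
    have hfp : Per (fun ξ => u ξ i * pds i (fun η => u η j) ξ) :=
      per_mul (hUp i) (per_pds (hU j) (hUp j) i)
    have hgs : ContDiff ℝ (⊤ : ℕ∞) (pds k (fun η => u η j)) := contDiff_pds (hU j) k
    have hgp : Per (pds k (fun η => u η j)) := per_pds (hU j) (hUp j) k
    have h1 : (∫ ξ in torusBox, u ξ i * pds i (fun η => u η j) ξ *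
          pds k (pds k (fun η => u η j)) ξ)
        = -∫ ξ in torusBox, pds k (fun ξ => u ξ i * pds i (fun η => u η j) ξ) ξ *
            pds k (fun η => u η j) ξ := ibp hfs hgs hfp hgp k
    have h3 : ∀ ξ : Fin 2 → ℝ, pds k (fun ξ => u ξ i * pds i (fun η => u η j) ξ) ξ *
        pds k (fun η => u η j) ξ
        = pds k (fun η => u η i) ξ * pds i (fun η => u η j) ξ * pds k (fun η => u η j) ξ
          + u ξ i * pds i (pds k (fun η => u η j)) ξ * pds k (fun η => u η j) ξ := by
      intro ξ
      rw [pds_mul (hU i) (contDiff_pds (hU j) i) k ξ, pds_comm (hU j) k i ξ]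
      ring
    calc (∫ ξ in torusBox,
          -(u ξ i * pds i (fun η => u η j) ξ * pds k (pds k (fun η => u η j)) ξ))
        = ∫ ξ in torusBox, pds k (fun ξ => u ξ i * pds i (fun η => u η j) ξ) ξ *
            pds k (fun η => u η j) ξ := by rw [integral_neg, h1, neg_neg]
      _ = ∫ ξ in torusBox, (pds k (fun η => u η i) ξ * pds i (fun η => u η j) ξ *
            pds k (fun η => u η j) ξ + u ξ i * pds i (pds k (fun η => u η j)) ξ *
            pds k (fun η => u η j) ξ) :=
          setIntegral_congr_fun measurableSet_torusBox (fun ξ _ => h3 ξ)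
      _ = _ := integral_add
            (integrableOn_torusBox (((c2 k i).mul (c2 i j)).mul (c2 k j)))
            (integrableOn_torusBox (((c1 i).mul (c3 i k j)).mul (c2 k j)))
  -- Part 1: the cubic term vanishes pointwise
  have part1 : ∑ i : Fin 2, ∑ j : Fin 2, ∑ k : Fin 2,
      (∫ ξ in torusBox, pds k (fun η => u η i) ξ * pds i (fun η => u η j) ξ *
        pds k (fun η => u η j) ξ) = 0 := by
    have cA : ∀ i j k : Fin 2, Continuous (fun ξ => pds k (fun η => u η i) ξ *
        pds i (fun η => u η j) ξ * pds k (fun η => u η j) ξ) :=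
      fun i j k => ((c2 k i).mul (c2 i j)).mul (c2 k j)
    calc ∑ i : Fin 2, ∑ j : Fin 2, ∑ k : Fin 2,
        (∫ ξ in torusBox, pds k (fun η => u η i) ξ * pds i (fun η => u η j) ξ *
          pds k (fun η => u η j) ξ)
        = ∑ i : Fin 2, ∑ j : Fin 2, ∫ ξ in torusBox, ∑ k : Fin 2,
            pds k (fun η => u η i) ξ * pds i (fun η => u η j) ξ *
              pds k (fun η => u η j) ξ := by
          refine Finset.sum_congr rfl fun i _ => Finset.sum_congr rfl fun j _ => ?_
          exact sumInt _ (fun k => cA i j k)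
      _ = ∑ i : Fin 2, ∫ ξ in torusBox, ∑ j : Fin 2, ∑ k : Fin 2,
            pds k (fun η => u η i) ξ * pds i (fun η => u η j) ξ *
              pds k (fun η => u η j) ξ := by
          refine Finset.sum_congr rfl fun i _ => ?_
          exact sumInt _ (fun j => continuous_finset_sum _ fun k _ => cA i j k)
      _ = ∫ ξ in torusBox, ∑ i : Fin 2, ∑ j : Fin 2, ∑ k : Fin 2,
            pds k (fun η => u η i) ξ * pds i (fun η => u η j) ξ *
              pds k (fun η => u η j) ξ :=
          sumInt _ (fun i => continuous_finset_sum _ fun j _ =>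
            continuous_finset_sum _ fun k _ => cA i j k)
      _ = 0 := by
          have hpt : ∀ ξ : Fin 2 → ℝ, (∑ i : Fin 2, ∑ j : Fin 2, ∑ k : Fin 2,
              pds k (fun η => u η i) ξ * pds i (fun η => u η j) ξ *
                pds k (fun η => u η j) ξ) = 0 := by
            intro ξ
            have h := hdvg' ξ
            rw [Fin.sum_univ_two] at h
            set a := pds 0 (fun η => u η 0) ξ with hA
            set b := pds 0 (fun η => u η 1) ξ with hB
            set c := pds 1 (fun η => u η 0) ξ with hC
            set d := pds 1 (fun η => u η 1) ξ with hD
            simp only [Fin.sum_univ_two, ← hA, ← hB, ← hC, ← hD]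
            linear_combination (a^2 - a*d + d^2 + b^2 + b*c + c^2) * h
          rw [setIntegral_congr_fun measurableSet_torusBox (fun ξ _ => hpt ξ), integral_zero]
  -- Part 2: the remaining term vanishes after a second integration by parts
  have part2 : ∀ j k : Fin 2, ∑ i : Fin 2,
      (∫ ξ in torusBox, u ξ i * pds i (pds k (fun η => u η j)) ξ *
        pds k (fun η => u η j) ξ) = 0 := by
    intro j k
    have hgs : ContDiff ℝ (⊤ : ℕ∞) (fun ξ => pds k (fun η => u η j) ξ * pds k (fun η => u η j) ξ) :=
      (contDiff_pds (hU j) k).mul (contDiff_pds (hU j) k)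
    have hgp : Per (fun ξ => pds k (fun η => u η j) ξ * pds k (fun η => u η j) ξ) :=
      per_mul (per_pds (hU j) (hUp j) k) (per_pds (hU j) (hUp j) k)
    have hpg : ∀ (i : Fin 2) (ξ : Fin 2 → ℝ),
        pds i (fun ξ => pds k (fun η => u η j) ξ * pds k (fun η => u η j) ξ) ξ
        = 2 * (pds i (pds k (fun η => u η j)) ξ * pds k (fun η => u η j) ξ) := by
      intro i ξ
      rw [pds_mul (contDiff_pds (hU j) k) (contDiff_pds (hU j) k) i ξ]; ring
    have t1 : ∀ i : Fin 2, (∫ ξ in torusBox, u ξ i * pds i (pds k (fun η => u η j)) ξ *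
        pds k (fun η => u η j) ξ)
        = (1/2) * ∫ ξ in torusBox, u ξ i *
            pds i (fun ξ => pds k (fun η => u η j) ξ * pds k (fun η => u η j) ξ) ξ := by
      intro i
      rw [← integral_const_mul]
      apply setIntegral_congr_fun measurableSet_torusBox
      intro ξ _
      beta_reduce
      rw [hpg i ξ]; ring
    have t2 : ∀ i : Fin 2, (∫ ξ in torusBox, u ξ i *
        pds i (fun ξ => pds k (fun η => u η j) ξ * pds k (fun η => u η j) ξ) ξ)
        = -∫ ξ in torusBox, pds i (fun η => u η i) ξ *
            (pds k (fun η => u η j) ξ * pds k (fun η => u η j) ξ) :=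
      fun i => ibp (hU i) hgs (hUp i) hgp i
    calc ∑ i : Fin 2, (∫ ξ in torusBox, u ξ i * pds i (pds k (fun η => u η j)) ξ *
          pds k (fun η => u η j) ξ)
        = ∑ i : Fin 2, (1/2) * -∫ ξ in torusBox, pds i (fun η => u η i) ξ *
            (pds k (fun η => u η j) ξ * pds k (fun η => u η j) ξ) := by
          refine Finset.sum_congr rfl fun i _ => ?_
          rw [t1 i, t2 i]
      _ = -(1/2) * ∑ i : Fin 2, ∫ ξ in torusBox, pds i (fun η => u η i) ξ *
            (pds k (fun η => u η j) ξ * pds k (fun η => u η j) ξ) := by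
          rw [Fin.sum_univ_two, Fin.sum_univ_two]; ring
      _ = -(1/2) * ∫ ξ in torusBox, ∑ i : Fin 2, pds i (fun η => u η i) ξ *
            (pds k (fun η => u η j) ξ * pds k (fun η => u η j) ξ) := by
          rw [sumInt (fun i ξ => pds i (fun η => u η i) ξ * (pds k (fun η => u η j) ξ * pds k (fun η => u η j) ξ)) (fun i => (c2 i i).mul ((c2 k j).mul (c2 k j)))]
      _ = 0 := by
          have hpt : ∀ ξ : Fin 2 → ℝ, (∑ i : Fin 2, pds i (fun η => u η i) ξ *
              (pds k (fun η => u η j) ξ * pds k (fun η => u η j) ξ)) = 0 := by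
            intro ξ
            rw [← Finset.sum_mul, hdvg' ξ, zero_mul]
          rw [setIntegral_congr_fun measurableSet_torusBox (fun ξ _ => hpt ξ),
            integral_zero, mul_zero]
  -- Final assembly
  calc ∑ i : Fin 2, ∑ j : Fin 2, ∫ ξ in torusBox, u ξ i * pd i u j ξ * (-(lap u j ξ))
      = ∑ i : Fin 2, ∑ j : Fin 2, ∑ k : Fin 2,
          ((∫ ξ in torusBox, pds k (fun η => u η i) ξ * pds i (fun η => u η j) ξ *
              pds k (fun η => u η j) ξ)
            + ∫ ξ in torusBox, u ξ i * pds i (pds k (fun η => u η j)) ξ *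
              pds k (fun η => u η j) ξ) := by
        refine Finset.sum_congr rfl fun i _ => Finset.sum_congr rfl fun j _ => ?_
        rw [step1 i j]
        exact Finset.sum_congr rfl fun k _ => step2 i j k
    _ = (∑ i : Fin 2, ∑ j : Fin 2, ∑ k : Fin 2,
          (∫ ξ in torusBox, pds k (fun η => u η i) ξ * pds i (fun η => u η j) ξ *
            pds k (fun η => u η j) ξ))
        + ∑ i : Fin 2, ∑ j : Fin 2, ∑ k : Fin 2,
          (∫ ξ in torusBox, u ξ i * pds i (pds k (fun η => u η j)) ξ *
            pds k (fun η => u η j) ξ) := by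
        simp only [Finset.sum_add_distrib]
    _ = ∑ j : Fin 2, ∑ k : Fin 2, ∑ i : Fin 2,
          (∫ ξ in torusBox, u ξ i * pds i (pds k (fun η => u η j)) ξ *
            pds k (fun η => u η j) ξ) := by
        rw [part1, zero_add, Finset.sum_comm]
        exact Finset.sum_congr rfl fun j _ => Finset.sum_comm
    _ = 0 := Finset.sum_eq_zero fun j _ => Finset.sum_eq_zero fun k _ => part2 j k
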